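/- arXiv:2310.11479 — 4 statements merged into one kernel-verified Lean document; each statement's English description precedes it below -/
import Mathlib

section
/- Let s_1, ..., s_n, s_{n+1} be exchangeable real-valued random variables, and for α ∈ (0,1) let Q_α be the ⌈(1-α)(n+1)⌉-th smallest value of the multiset {s_1, ..., s_n} ∪ {∞}. Then P[s_{n+1} ≤ Q_α] ≥ 1 - α. -/
/-!
Put `k = ⌈(1 - α)(n + 1)⌉` and let `E j` be the event that fewer than `k` of the scores lie
strictly below `s j`. Since `+∞` lies below nothing, `s (n + 1) ≤ Q_α` is exactly the event
`E (n + 1)`. In every outcome the indices of the `k` smallest scores all lie in their `E j`, so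
`k ≤ ∑ j, ℙ (E j)`; by exchangeability all `E j` have the same probability, whence
`(1 - α)(n + 1) ≤ k ≤ (n + 1) ℙ (E (n + 1))`.
-/

open MeasureTheory ProbabilityTheory

/-- The `k`-th smallest element of a finite multiset of extended reals
(i.e. the `k`-th order statistic, 1-indexed). -/
noncomputable def kthSmallest (s : Multiset EReal) (k : ℕ) : EReal :=
  (s.sort (· ≤ ·)).getD (k - 1) ⊤

/-- A finite family of random variables is exchangeable if its joint law is
invariant under every permutation of the indices. -/
def Exchangeable {Ω : Type*} [MeasureSpace Ω] {m : ℕ} {E : Type*} [MeasurableSpace E]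
    (s : Fin m → Ω → E) : Prop :=
  ∀ π : Equiv.Perm (Fin m),
    Measure.map (fun ω i => s (π i) ω) (ℙ : Measure Ω) =
      Measure.map (fun ω i => s i ω) (ℙ : Measure Ω)

open Finset
open scoped ENNReal

namespace Monotone
variable {α : Type*} [LinearOrder α] {m : ℕ} {f : Fin m → α}

theorem card_filter_lt_le (hf : Monotone f) {t : α} {i : Fin m} (h : t ≤ f i) :
    #{j | f j < t} ≤ i := by
  calc #{j | f j < t} ≤ #(Iio i) := card_le_card fun j hj => by
        simp only [mem_filter, mem_univ, true_and] at hj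
        exact mem_Iio.2 (lt_of_not_ge fun hij => (h.trans (hf hij)).not_gt hj)
    _ = i := Fin.card_Iio i

theorem le_apply_iff_card_filter_lt_le (hf : Monotone f) (t : α) (i : Fin m) :
    t ≤ f i ↔ #{j | f j < t} ≤ i := by
  refine ⟨hf.card_filter_lt_le, fun h => not_lt.1 fun hlt => ?_⟩
  have hsub : Iic i ⊆ ({j | f j < t} : Finset _) := fun j hj =>
    mem_filter.2 ⟨mem_univ j, (hf (mem_Iic.1 hj)).trans_lt hlt⟩
  have := card_le_card hsub
  rw [Fin.card_Iic] at this
  omega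

end Monotone

theorem Multiset.countP_eq_card_filter_sort_get {α : Type*} [LinearOrder α] (m : Multiset α)
    (p : α → Prop) [DecidablePred p] :
    m.countP p = #{j | p ((m.sort (· ≤ ·)).get j)} := by
  conv_lhs => rw [← Multiset.sort_eq m (· ≤ ·), ← List.ofFn_get (m.sort (· ≤ ·)),
    ← Fin.univ_val_map]
  rw [Multiset.countP_map]
  rfl

theorem le_kthSmallest_iff (m : Multiset EReal) {k : ℕ} (hk : 0 < k) (t : EReal) :
    t ≤ kthSmallest m k ↔ m.countP (· < t) < k := by
  rw [m.countP_eq_card_filter_sort_get, kthSmallest]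
  set l := m.sort (· ≤ ·)
  have hl : Monotone l.get := (Multiset.pairwise_sort m _).sortedLE.monotone_get
  by_cases hkl : k - 1 < l.length
  · rw [List.getD_eq_getElem _ _ hkl, ← List.get_eq_getElem (i := ⟨k - 1, hkl⟩),
      hl.le_apply_iff_card_filter_lt_le, Fin.val_mk]
    omega
  · rw [List.getD_eq_default _ _ (not_lt.1 hkl)]
    have := (card_filter_le univ fun j => l.get j < t).trans_eq (card_fin l.length)
    simp only [le_top, true_iff]
    omega

section StrictRank
variable {α : Type*} [LinearOrder α] {m : ℕ}

def strictRank (x : Fin m → α) (j : Fin m) : ℕ := #{i | x i < x j}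

theorem strictRank_comp_perm (x : Fin m → α) (σ : Equiv.Perm (Fin m)) (j : Fin m) :
    strictRank (x ∘ σ) j = strictRank x (σ j) :=
  card_equiv σ (by simp)

theorem le_card_filter_strictRank_lt {k : ℕ} (hk : k ≤ m) (x : Fin m → α) :
    k ≤ #{j | strictRank x j < k} := by
  set σ := Tuple.sort x
  calc k = #(univ : Finset (Fin k)) := (card_fin k).symm
    _ ≤ _ := card_le_card_of_injOn (fun p => σ (Fin.castLE hk p))
      (fun p _ => by
        have := (Tuple.monotone_sort x).card_filter_lt_le (le_refl ((x ∘ σ) (Fin.castLE hk p)))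
        simp only [coe_filter, mem_univ, true_and, Set.mem_ofPred_eq, ← strictRank_comp_perm]
        exact this.trans_lt p.isLt)
      (fun p _ q _ hpq => Fin.castLE_injective hk (σ.injective hpq))

theorem measurable_strictRank [MeasurableSpace α] [TopologicalSpace α] [OpensMeasurableSpace α]
    [OrderClosedTopology α] [SecondCountableTopology α] (j : Fin m) :
    Measurable fun x : Fin m → α => strictRank x j := by
  simp only [strictRank, card_filter]
  exact Finset.measurable_sum _ fun i _ => Measurable.ite
    (measurableSet_lt (measurable_pi_apply i) (measurable_pi_apply j)) measurable_const
    measurable_const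

end StrictRank

theorem le_sum_measure_of_le_card_filter_mem {Ω ι : Type*} [MeasurableSpace Ω] [Fintype ι]
    (μ : Measure Ω) {E : ι → Set Ω} [∀ ω, DecidablePred (ω ∈ E ·)]
    (hE : ∀ i, MeasurableSet (E i)) {k : ℕ} (h : ∀ ω, k ≤ #{i | ω ∈ E i}) :
    k * μ Set.univ ≤ ∑ i, μ (E i) := by
  calc (k : ℝ≥0∞) * μ Set.univ = ∫⁻ _, (k : ℝ≥0∞) ∂μ := (lintegral_const _).symm
    _ ≤ ∫⁻ ω, ∑ i, (E i).indicator 1 ω ∂μ := lintegral_mono fun ω => by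
          simp only [Set.indicator_apply, Pi.one_apply, sum_boole]
          exact_mod_cast h ω
    _ = ∑ i, μ (E i) := by
          rw [lintegral_finsetSum _ fun i _ => measurable_one.indicator (hE i)]
          simp only [lintegral_indicator_one (hE _)]

namespace Exchangeable
variable {Ω : Type*} [MeasureSpace Ω] {m : ℕ} {E : Type*} [MeasurableSpace E]
  {s : Fin m → Ω → E}

theorem measure_preimage_perm (hexch : Exchangeable s) (hs : ∀ i, Measurable (s i))
    (π : Equiv.Perm (Fin m)) {B : Set (Fin m → E)} (hB : MeasurableSet B) :
    ℙ {ω | (fun i => s (π i) ω) ∈ B} = ℙ {ω | (fun i => s i ω) ∈ B} := by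
  have h := congrArg (· B) (hexch π)
  rwa [Measure.map_apply (measurable_pi_lambda _ fun i => hs (π i)) hB,
    Measure.map_apply (measurable_pi_lambda _ hs) hB] at h

theorem measure_strictRank_lt_eq [LinearOrder E] [TopologicalSpace E] [OpensMeasurableSpace E]
    [OrderClosedTopology E] [SecondCountableTopology E] (hexch : Exchangeable s)
    (hs : ∀ i, Measurable (s i)) (k : ℕ) (j j' : Fin m) :
    ℙ {ω | strictRank (s · ω) j < k} = ℙ {ω | strictRank (s · ω) j' < k} := by
  have h := hexch.measure_preimage_perm hs (Equiv.swap j' j) (B := {x | strictRank x j' < k})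
    (measurable_strictRank j' measurableSet_Iio)
  have hrank : ∀ ω, strictRank (fun i => s (Equiv.swap j' j i) ω) j' = strictRank (s · ω) j :=
    fun ω => (strictRank_comp_perm (s · ω) _ j').trans (by rw [Equiv.swap_apply_left])
  simpa only [Set.mem_ofPred_eq, hrank] using h

end Exchangeable

theorem countP_lt_coe_last_eq_strictRank (n : ℕ) (x : Fin (n + 1) → ℝ) :
    Multiset.countP (· < ((x (Fin.last n) : ℝ) : EReal))
      ((Multiset.ofList (List.ofFn fun i : Fin n => ((x i.castSucc : ℝ) : EReal))) + {⊤}) =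
      strictRank x (Fin.last n) := by
  rw [Multiset.countP_add, ← Fin.univ_val_map, Multiset.countP_map, strictRank, card_filter,
    Fin.sum_univ_castSucc]
  simp only [← filter_val, ← card_def, card_filter]
  simp [Multiset.countP_eq_zero]

theorem ENNReal.ofReal_le_of_ceil_mul_le {a : ℝ} {N : ℕ} (hN : 0 < N) {p : ℝ≥0∞}
    (h : (⌈a * N⌉₊ : ℝ≥0∞) ≤ N * p) : ENNReal.ofReal a ≤ p := by
  refine (ENNReal.mul_le_mul_iff_right (by positivity) (ENNReal.natCast_ne_top N)).1 ?_
  calc (N : ℝ≥0∞) * ENNReal.ofReal a = ENNReal.ofReal (a * N) := by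
        rw [mul_comm a, ENNReal.ofReal_mul (Nat.cast_nonneg N), ENNReal.ofReal_natCast]
    _ ≤ ⌈a * N⌉₊ := by
        rw [← ENNReal.ofReal_natCast]
        exact ENNReal.ofReal_le_ofReal (Nat.le_ceil _)
    _ ≤ N * p := h

theorem stmt0 {Ω : Type*} [MeasureSpace Ω] [IsProbabilityMeasure (ℙ : Measure Ω)]
    (n : ℕ) (s : Fin (n + 1) → Ω → ℝ) (hmeas : ∀ i, Measurable (s i))
    (hexch : Exchangeable s) (α : ℝ) (hα : α ∈ Set.Ioo (0 : ℝ) 1) :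
    ENNReal.ofReal (1 - α) ≤
      ℙ {ω | (s (Fin.last n) ω : EReal) ≤
        kthSmallest
          ((Multiset.ofList (List.ofFn fun i : Fin n => ((s i.castSucc ω : ℝ) : EReal))) + {⊤})
          ⌈(1 - α) * (n + 1)⌉₊} := by
  obtain ⟨hα0, hα1⟩ := hα
  set k := ⌈(1 - α) * (n + 1)⌉₊ with hk
  have hk0 : 0 < k := Nat.ceil_pos.2 (by nlinarith)
  have hkn : k ≤ n + 1 := Nat.ceil_le.2 (by push_cast; nlinarith)
  have hlast : ENNReal.ofReal (1 - α) ≤ ℙ {ω | strictRank (s · ω) (Fin.last n) < k} := by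
    have hcount := le_sum_measure_of_le_card_filter_mem
      (E := fun j => {ω | strictRank (s · ω) j < k}) ℙ
      (fun j => (measurable_strictRank j).comp (measurable_pi_lambda _ hmeas) measurableSet_Iio)
      fun ω => le_card_filter_strictRank_lt hkn (s · ω)
    simp only [hexch.measure_strictRank_lt_eq hmeas k _ (Fin.last n), sum_const, card_univ,
      Fintype.card_fin, measure_univ, mul_one, nsmul_eq_mul] at hcount
    refine ENNReal.ofReal_le_of_ceil_mul_le (N := n + 1) n.succ_pos ?_
    push_cast at hcount ⊢
    rwa [← hk]
  convert hlast using 2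
  ext ω
  rw [Set.mem_ofPred_eq, Set.mem_ofPred_eq, le_kthSmallest_iff _ hk0,
    countP_lt_coe_last_eq_strictRank n (s · ω)]
end

section
/- Let s_1, ..., s_n, s_{n+1} be real numbers, α ∈ (0,1), let Q_α^{(n)} denote the ⌈(1-α)(n+1)⌉-th smallest element of {s_1,...,s_n} ∪ {∞} and Q_α^{(n+1)} denote the ⌈(1-α)(n+1)⌉-th smallest element of {s_1,...,s_n,s_{n+1}}. Then s_{n+1} > Q_α^{(n)} if and only if s_{n+1} > Q_α^{(n+1)}. -/
open Classical

lemma getD_lt_iff (x : EReal) :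
    ∀ (l : List EReal), l.Pairwise (· ≤ ·) → ∀ m : ℕ,
      ((l.getD m ⊤ < x) ↔ m < l.countP (fun b => decide (b < x)))
  | [], _, m => by simp
  | a :: t, h, 0 => by
      rcases List.pairwise_cons.mp h with ⟨ha, ht⟩
      simp only [List.getD_cons_zero, List.countP_cons]
      constructor
      · intro hax
        simp [hax]
      · intro h0
        by_contra hax
        push_neg at hax
        have hc : t.countP (fun b => decide (b < x)) = 0 := by
          apply List.countP_eq_zero.2
          intro b hb
          simp only [decide_eq_true_eq, not_lt]
          exact hax.trans (ha b hb)
        simp [hc, not_lt.2 hax] at h0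
  | a :: t, h, (m+1) => by
      rcases List.pairwise_cons.mp h with ⟨ha, ht⟩
      simp only [List.getD_cons_succ, List.countP_cons]
      rw [getD_lt_iff x t ht m]
      by_cases hax : a < x
      · simp [hax]
      · have hc : t.countP (fun b => decide (b < x)) = 0 := by
          apply List.countP_eq_zero.2
          intro b hb
          simp only [decide_eq_true_eq, not_lt]
          exact (not_lt.1 hax).trans (ha b hb)
        simp [hc, hax]

lemma kth_lt_iff (S : Multiset EReal) (k : ℕ) (x : EReal) :
    kthSmallest S k < x ↔ k - 1 < S.countP (· < x) := by
  rw [kthSmallest, getD_lt_iff x _ (S.pairwise_sort _)]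
  rw [← Multiset.coe_countP, Multiset.sort_eq]

theorem stmt1 (n : ℕ) (s : Fin (n + 1) → ℝ) (α : ℝ) (hα : α ∈ Set.Ioo (0 : ℝ) 1) :
    ((s (Fin.last n) : EReal) >
        kthSmallest
          ((Multiset.ofList (List.ofFn fun i : Fin n => ((s i.castSucc : ℝ) : EReal))) + {⊤})
          ⌈(1 - α) * (n + 1)⌉₊) ↔
      ((s (Fin.last n) : EReal) >
        kthSmallest
          (Multiset.ofList (List.ofFn fun i : Fin (n + 1) => ((s i : ℝ) : EReal)))
          ⌈(1 - α) * (n + 1)⌉₊) := by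
  set x : EReal := (s (Fin.last n) : EReal) with hx
  set M : Multiset EReal :=
    Multiset.ofList (List.ofFn fun i : Fin n => ((s i.castSucc : ℝ) : EReal)) with hM
  have hsplit : Multiset.ofList (List.ofFn fun i : Fin (n + 1) => ((s i : ℝ) : EReal))
      = M + {x} := by
    rw [List.ofFn_succ']
    simp only [List.concat_eq_append, hM, hx, Fin.coe_castSucc]
    rfl
  rw [hsplit]
  show kthSmallest _ _ < x ↔ kthSmallest _ _ < x
  rw [kth_lt_iff, kth_lt_iff, Multiset.countP_add, Multiset.countP_add]
  have h1 : Multiset.countP (· < x) ({⊤} : Multiset EReal) = 0 := by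
    refine Multiset.countP_eq_zero.2 ?_
    intro a ha
    rw [Multiset.mem_singleton] at ha
    subst ha
    exact not_lt.2 le_top
  have h2 : Multiset.countP (· < x) ({x} : Multiset EReal) = 0 := by
    refine Multiset.countP_eq_zero.2 ?_
    intro a ha
    rw [Multiset.mem_singleton] at ha
    subst ha
    exact lt_irrefl x
  rw [h1, h2]
end

section
/- If s_1, ..., s_{n+1} are exchangeable real-valued random variables and Q_α^{(n+1)} denotes the ⌈(1-α)(n+1)⌉-th smallest value among s_1, ..., s_{n+1}, then P[s_{n+1} ≤ Q_α^{(n+1)}] ≥ (⌈(1-α)(n+1)⌉)/(n+1) ≥ 1 - α. -/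
open MeasureTheory ProbabilityTheory

/-!
Let `A i` be the event that `s i` is at most the `k`-th smallest of the values. At every
outcome the indices of the `k` smallest values lie in their events, so at least `k` of the
events occur and `∑ i, ℙ (A i) ≥ k`. Exchangeability makes all `ℙ (A i)` equal, hence
`(n + 1) ℙ (A (Fin.last n)) ≥ k`.
-/

open scoped ENNReal
open Finset

theorem List.Pairwise.getElem_iff_lt_countP {α : Type*} [Preorder α] {p : α → Bool}
    (hp : Antitone p) {L : List α} (hL : L.Pairwise (· ≤ ·)) {j : ℕ}
    (hj : j < L.length) : p L[j] ↔ j < L.countP p := by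
  induction L generalizing j with
  | nil => simp at hj
  | cons b L ih =>
    obtain ⟨hb, hL⟩ := List.pairwise_cons.mp hL
    by_cases hpb : p b
    · rw [List.countP_cons_of_pos hpb]
      cases j with
      | zero => simp [hpb]
      | succ j => simpa using ih hL (by simpa using hj)
    · have hnot : ∀ a ∈ L, ¬ p a := fun a ha hpa =>
        hpb (Bool.le_iff_imp.mp (hp (hb a ha)) hpa)
      rw [List.countP_cons_of_neg hpb, List.countP_eq_zero.mpr hnot]
      cases j with
      | zero => simpa using hpb
      | succ j => simpa using hnot _ (List.getElem_mem _)

theorem Multiset.countP_coe_ofFn {α : Type*} {m : ℕ} (p : α → Prop) [DecidablePred p]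
    (f : Fin m → α) : Multiset.countP p ↑(List.ofFn f) = #{i | p (f i)} := by
  rw [← Fin.univ_val_map, Multiset.countP_map]
  rfl

theorem Multiset.countP_sort {α : Type*} (r : α → α → Prop) [DecidableRel r] [IsTrans α r]
    [Std.Antisymm r] [Std.Total r] (s : Multiset α) (p : α → Prop) [DecidablePred p] :
    (s.sort r).countP (fun b => decide (p b)) = s.countP p := by
  rw [← Multiset.coe_countP, Multiset.sort_eq]

section kthSmallest

variable {s : Multiset EReal} {k : ℕ}

theorem kthSmallest_eq_getElem (hk0 : 0 < k) (hk : k ≤ Multiset.card s) :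
    kthSmallest s k = (s.sort (· ≤ ·))[k - 1]'(by rw [Multiset.length_sort]; omega) :=
  List.getD_eq_getElem _ _ _

theorem apply_kthSmallest_iff_le_countP {p : EReal → Prop} [DecidablePred p]
    (hp : Antitone p) (hk0 : 0 < k) (hk : k ≤ Multiset.card s) :
    p (kthSmallest s k) ↔ k ≤ s.countP p := by
  have h := (Multiset.pairwise_sort s (· ≤ ·)).getElem_iff_lt_countP
    (p := fun b => decide (p b))
    (fun a b hab => Bool.le_iff_imp.mpr (by simpa using hp hab)) (j := k - 1)
    (by rw [Multiset.length_sort]; omega)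
  rw [Multiset.countP_sort, decide_eq_true_iff, ← kthSmallest_eq_getElem hk0 hk] at h
  rw [h]
  omega

theorem le_countP_le_kthSmallest (hk0 : 0 < k) (hk : k ≤ Multiset.card s) :
    k ≤ s.countP (· ≤ kthSmallest s k) :=
  (apply_kthSmallest_iff_le_countP (fun _ _ hab hb => hab.trans hb) hk0 hk).mp le_rfl

theorem le_kthSmallest_iff_s2 (hk0 : 0 < k) (hk : k ≤ Multiset.card s) {a : EReal} :
    a ≤ kthSmallest s k ↔ s.countP (· < a) < k := by
  rw [← not_lt, apply_kthSmallest_iff_le_countP (fun _ _ hab hb => hab.trans_lt hb) hk0 hk,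
    not_le]

end kthSmallest

section ofFn

variable {m k : ℕ}

theorem kthSmallest_ofFn_comp_perm (x : Fin m → EReal) (π : Equiv.Perm (Fin m)) :
    kthSmallest ↑(List.ofFn (x ∘ π)) k = kthSmallest ↑(List.ofFn x) k := by
  rw [Multiset.coe_eq_coe.mpr (π.ofFn_comp_perm x)]

theorem le_card_filter_le_kthSmallest_ofFn (x : Fin m → EReal) (hk0 : 0 < k) (hk : k ≤ m) :
    k ≤ #{i | x i ≤ kthSmallest ↑(List.ofFn x) k} := by
  have h := le_countP_le_kthSmallest (s := ↑(List.ofFn x)) hk0 (by simpa using hk)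
  rwa [Multiset.countP_coe_ofFn] at h

theorem measurable_kthSmallest_ofFn (hk0 : 0 < k) (hk : k ≤ m) :
    Measurable fun x : Fin m → EReal => kthSmallest ↑(List.ofFn x) k := by
  refine measurable_of_Ici fun a => ?_
  have hcount : Measurable fun x : Fin m → EReal => #{i | x i < a} := by
    simp_rw [Finset.card_filter]
    exact Finset.measurable_sum _ fun i _ =>
      Measurable.ite (measurableSet_lt (measurable_pi_apply i) measurable_const)
        measurable_const measurable_const
  have hpre : (fun x : Fin m → EReal => kthSmallest ↑(List.ofFn x) k) ⁻¹' Set.Ici a =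
      {x | #{i | x i < a} < k} := by
    ext x
    rw [Set.mem_preimage, Set.mem_Ici,
      le_kthSmallest_iff_s2 (s := ↑(List.ofFn x)) hk0 (by simpa using hk), Multiset.countP_coe_ofFn]
    rfl
  rw [hpre]
  exact measurableSet_lt hcount measurable_const

end ofFn

theorem Exchangeable.measure_comp_perm_mem {Ω : Type*} [MeasureSpace Ω] {m : ℕ} {E : Type*}
    [MeasurableSpace E] {s : Fin m → Ω → E} (hexch : Exchangeable s)
    (hmeas : ∀ i, Measurable (s i)) (π : Equiv.Perm (Fin m)) {B : Set (Fin m → E)}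
    (hB : MeasurableSet B) :
    ℙ {ω | (fun i => s (π i) ω) ∈ B} = ℙ {ω | (fun i => s i ω) ∈ B} := by
  change ℙ ((fun ω i => s (π i) ω) ⁻¹' B) = ℙ ((fun ω i => s i ω) ⁻¹' B)
  rw [← Measure.map_apply (measurable_pi_lambda _ fun i => hmeas (π i)) hB, hexch π,
    Measure.map_apply (measurable_pi_lambda _ hmeas) hB]

theorem MeasureTheory.Measure.mul_measure_univ_le_sum_of_le_card {Ω ι : Type*}
    [MeasurableSpace Ω] [Fintype ι] (μ : Measure Ω) {A : ι → Set Ω}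
    [∀ ω, DecidablePred fun i => ω ∈ A i] (hA : ∀ i, MeasurableSet (A i)) {k : ℕ}
    (hk : ∀ ω, k ≤ #{i | ω ∈ A i}) :
    k * μ Set.univ ≤ ∑ i, μ (A i) := by
  have hsum : ∀ ω, ∑ i, (A i).indicator 1 ω = (#{i | ω ∈ A i} : ℝ≥0∞) := by
    intro ω
    rw [Finset.card_filter, Nat.cast_sum]
    refine Finset.sum_congr rfl fun i _ => ?_
    by_cases h : ω ∈ A i <;> simp [h]
  calc (k : ℝ≥0∞) * μ Set.univ = ∫⁻ _, (k : ℝ≥0∞) ∂μ := (lintegral_const _).symm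
    _ ≤ ∫⁻ ω, ∑ i, (A i).indicator 1 ω ∂μ :=
        lintegral_mono fun ω => by rw [hsum]; exact Nat.cast_le.mpr (hk ω)
    _ = ∑ i, μ (A i) := by
        rw [lintegral_finsetSum _ fun i _ => measurable_one.indicator (hA i)]
        simp only [lintegral_indicator_one (hA _)]

theorem Exchangeable.card_le_mul_measure_le_kthSmallest {Ω : Type*} [MeasureSpace Ω]
    [IsProbabilityMeasure (ℙ : Measure Ω)] {m k : ℕ} {s : Fin m → Ω → ℝ}
    (hmeas : ∀ i, Measurable (s i)) (hexch : Exchangeable s) (hk0 : 0 < k) (hk : k ≤ m)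
    (j : Fin m) :
    (k : ℝ≥0∞) ≤ m * ℙ {ω | (s j ω : EReal) ≤
      kthSmallest ↑(List.ofFn fun i => (s i ω : EReal)) k} := by
  classical
  set B : Fin m → Set (Fin m → ℝ) :=
    fun i => {x | (x i : EReal) ≤ kthSmallest ↑(List.ofFn fun l => (x l : EReal)) k}
  set A : Fin m → Set Ω := fun i => {ω | (fun l => s l ω) ∈ B i}
  have hB : ∀ i, MeasurableSet (B i) := fun i =>
    measurableSet_le (measurable_coe_real_ereal.comp (measurable_pi_apply i))
      ((measurable_kthSmallest_ofFn hk0 hk).comp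
        (measurable_pi_lambda _ fun l => measurable_coe_real_ereal.comp (measurable_pi_apply l)))
  have hsame : ∀ i, ℙ (A i) = ℙ (A j) := by
    intro i
    rw [← hexch.measure_comp_perm_mem hmeas (Equiv.swap j i) (hB j)]
    congr! 3 with ω
    simp only [B, Set.mem_ofPred_eq, Equiv.swap_apply_left]
    exact iff_of_eq (congrArg (_ ≤ ·)
      (kthSmallest_ofFn_comp_perm (fun l => (s l ω : EReal)) (Equiv.swap j i)).symm)
  have hcount : ∀ ω, k ≤ #{i | ω ∈ A i} := fun ω =>
    le_card_filter_le_kthSmallest_ofFn (fun l => (s l ω : EReal)) hk0 hk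
  calc (k : ℝ≥0∞) = k * ℙ Set.univ := by rw [measure_univ, mul_one]
    _ ≤ ∑ i, ℙ (A i) :=
        Measure.mul_measure_univ_le_sum_of_le_card _ (A := A)
          (fun i => measurable_pi_lambda _ hmeas (hB i)) hcount
    _ = m * ℙ (A j) := by
        simp only [hsame, Finset.sum_const, Finset.card_univ, Fintype.card_fin, nsmul_eq_mul]

theorem stmt2 {Ω : Type*} [MeasureSpace Ω] [IsProbabilityMeasure (ℙ : Measure Ω)]
    (n : ℕ) (s : Fin (n + 1) → Ω → ℝ) (hmeas : ∀ i, Measurable (s i))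
    (hexch : Exchangeable s) (α : ℝ) (hα : α ∈ Set.Ioo (0 : ℝ) 1) :
    ENNReal.ofReal ((⌈(1 - α) * (n + 1)⌉₊ : ℝ) / (n + 1)) ≤
      ℙ {ω | (s (Fin.last n) ω : EReal) ≤
        kthSmallest (Multiset.ofList (List.ofFn fun i : Fin (n + 1) => ((s i ω : ℝ) : EReal)))
          ⌈(1 - α) * (n + 1)⌉₊} ∧
    1 - α ≤ (⌈(1 - α) * (n + 1)⌉₊ : ℝ) / (n + 1) := by
  obtain ⟨hα0, hα1⟩ := hα
  set k := ⌈(1 - α) * (n + 1)⌉₊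
  have hn : (0 : ℝ) < n + 1 := by positivity
  have hk0 : 0 < k := Nat.ceil_pos.mpr (by nlinarith)
  have hk : k ≤ n + 1 := Nat.ceil_le.mpr (by push_cast; nlinarith)
  refine ⟨?_, (le_div_iff₀ hn).mpr (Nat.le_ceil _)⟩
  have h := hexch.card_le_mul_measure_le_kthSmallest hmeas hk0 hk (Fin.last n)
  rw [ENNReal.ofReal_div_of_pos hn, ENNReal.ofReal_natCast,
    show ENNReal.ofReal (n + 1) = ((n + 1 : ℕ) : ℝ≥0∞) by
      exact_mod_cast ENNReal.ofReal_natCast (n + 1)]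
  exact ENNReal.div_le_of_le_mul' h
end

section
/- Coverage with ties via ranks: if s_1,...,s_{n+1} are exchangeable (ties allowed) then P[ |{i ≤ n : s_i < s_{n+1}}| ≥ k ] ≤ (n+1-k)/(n+1) for every integer k with 1 ≤ k ≤ n+1. -/
/-!
Write `numLT x j` for the number of coordinates of `x` strictly below `x j`. For every
point `x`, at most `m - k` indices `j` have `numLT x j ≥ k`: below the lowest such index lie
at least `k` coordinates, none of which is such an index. Summing over `j` and integrating,
the probabilities `ℙ (numLT s j ≥ k)` add up to at most `m - k`, and by exchangeability
they are all equal, so each is at most `(m - k) / m`.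
-/

open MeasureTheory ProbabilityTheory

open Finset
open scoped ENNReal

section NumLT

variable {ι κ α : Type*} [Fintype ι] [Fintype κ] [LinearOrder α]

def numLT (x : ι → α) (j : ι) : ℕ := #{i | x i < x j}

theorem card_filter_le_numLT_le (x : ι → α) (k : ℕ) :
    #{j | k ≤ numLT x j} ≤ Fintype.card ι - k := by
  classical
  set S : Finset ι := {j | k ≤ numLT x j}
  obtain hS | hS := S.eq_empty_or_nonempty
  · simp [hS]
  obtain ⟨j₀, hj₀, hmin⟩ := S.exists_min_image x hS
  have hdisj : Disjoint S ({i | x i < x j₀} : Finset ι) :=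
    disjoint_filter.2 fun i _ hi hlt => (hmin i (mem_filter.2 ⟨mem_univ i, hi⟩)).not_gt hlt
  have hk : k ≤ numLT x j₀ := (mem_filter.1 hj₀).2
  have := card_union_of_disjoint hdisj ▸ card_le_univ (S ∪ ({i | x i < x j₀} : Finset ι))
  unfold numLT at hk
  omega

theorem numLT_comp_equiv (x : ι → α) (e : κ ≃ ι) (j : κ) : numLT (x ∘ e) j = numLT x (e j) :=
  card_equiv e (by simp)

theorem numLT_last {n : ℕ} (x : Fin (n + 1) → α) :
    numLT x (Fin.last n) = #{i : Fin n | x i.castSucc < x (Fin.last n)} := by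
  rw [numLT, card_filter, card_filter, Fin.sum_univ_castSucc]
  simp

theorem measurable_numLT [TopologicalSpace α] [OrderClosedTopology α] [SecondCountableTopology α]
    [MeasurableSpace α] [OpensMeasurableSpace α] (j : ι) :
    Measurable fun x : ι → α => numLT x j := by
  simp_rw [numLT, card_filter]
  exact Finset.measurable_sum _ fun i _ =>
    Measurable.ite (measurableSet_lt (measurable_pi_apply i) (measurable_pi_apply j))
      measurable_const measurable_const

theorem measurableSet_le_numLT [TopologicalSpace α] [OrderClosedTopology α]
    [SecondCountableTopology α] [MeasurableSpace α] [OpensMeasurableSpace α] (k : ℕ) (j : ι) :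
    MeasurableSet {x : ι → α | k ≤ numLT x j} :=
  measurableSet_le measurable_const (measurable_numLT j)

end NumLT

open scoped Classical in
theorem sum_measure_le_of_forall_card_le {Ω ι : Type*} [MeasurableSpace Ω] (μ : Measure Ω)
    (s : Finset ι) {A : ι → Set Ω} (hA : ∀ i ∈ s, MeasurableSet (A i)) {c : ℕ}
    (hc : ∀ ω, #{i ∈ s | ω ∈ A i} ≤ c) :
    ∑ i ∈ s, μ (A i) ≤ c * μ Set.univ := by
  calc ∑ i ∈ s, μ (A i) = ∑ i ∈ s, ∫⁻ ω, (A i).indicator 1 ω ∂μ :=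
        sum_congr rfl fun i hi => (lintegral_indicator_one (hA i hi)).symm
    _ = ∫⁻ ω, ∑ i ∈ s, (A i).indicator 1 ω ∂μ :=
        (lintegral_finsetSum _ fun i hi => measurable_one.indicator (hA i hi)).symm
    _ ≤ ∫⁻ _, (c : ℝ≥0∞) ∂μ := lintegral_mono fun ω => by
        simpa [Set.indicator_apply, sum_boole] using hc ω
    _ = c * μ Set.univ := lintegral_const _

section Exchangeable

variable {Ω : Type*} [MeasureSpace Ω] {m : ℕ} {E : Type*} [MeasurableSpace E]
  {s : Fin m → Ω → E}

theorem Exchangeable.measure_preimage_comp_perm (hexch : Exchangeable s)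
    (hmeas : ∀ i, Measurable (s i)) (π : Equiv.Perm (Fin m)) {B : Set (Fin m → E)}
    (hB : MeasurableSet B) :
    ℙ ((fun ω i => s (π i) ω) ⁻¹' B) = ℙ ((fun ω i => s i ω) ⁻¹' B) := by
  rw [← Measure.map_apply (measurable_pi_lambda _ fun i => hmeas (π i)) hB, hexch π,
    Measure.map_apply (measurable_pi_lambda _ hmeas) hB]

variable [LinearOrder E] [TopologicalSpace E] [OrderClosedTopology E] [SecondCountableTopology E]
  [OpensMeasurableSpace E]

theorem Exchangeable.measure_setOf_le_numLT_eq (hexch : Exchangeable s) (hmeas : ∀ i, Measurable (s i))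
    (k : ℕ) (j j' : Fin m) :
    ℙ {ω | k ≤ numLT (fun i => s i ω) j} = ℙ {ω | k ≤ numLT (fun i => s i ω) j'} := by
  have h := hexch.measure_preimage_comp_perm hmeas (Equiv.swap j j')
    (measurableSet_le_numLT k j')
  refine (congrArg ℙ (Set.ext fun ω => ?_)).trans h
  change k ≤ numLT (fun i => s i ω) j ↔ k ≤ numLT ((fun i => s i ω) ∘ Equiv.swap j j') j'
  rw [numLT_comp_equiv, Equiv.swap_apply_right]

theorem Exchangeable.measure_setOf_le_numLT_le [IsProbabilityMeasure (ℙ : Measure Ω)]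
    (hexch : Exchangeable s) (hmeas : ∀ i, Measurable (s i)) (k : ℕ) (j : Fin m) :
    ℙ {ω | k ≤ numLT (fun i => s i ω) j} ≤ ((m : ℝ≥0∞) - k) / m := by
  have hsum := sum_measure_le_of_forall_card_le ℙ univ (c := m - k)
    (A := fun j => {ω | k ≤ numLT (fun i => s i ω) j})
    (fun j _ => measurable_pi_lambda _ hmeas (measurableSet_le_numLT k j))
    (fun ω => by simpa using card_filter_le_numLT_le (fun i => s i ω) k)
  rw [measure_univ, mul_one, ENNReal.natCast_sub,
    sum_congr rfl fun j' _ => hexch.measure_setOf_le_numLT_eq hmeas k j' j, sum_const, card_univ,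
    Fintype.card_fin, nsmul_eq_mul] at hsum
  rw [ENNReal.le_div_iff_mul_le (by simp [j.pos.ne']) (by simp), mul_comm]
  exact hsum

end Exchangeable

theorem stmt12_general {Ω : Type*} [MeasureSpace Ω] [IsProbabilityMeasure (ℙ : Measure Ω)]
    (n : ℕ) (s : Fin (n + 1) → Ω → ℝ) (hmeas : ∀ i, Measurable (s i))
    (hexch : Exchangeable s)
    (k : ℕ) :
    ℙ {ω | k ≤ (Finset.univ.filter fun i : Fin n =>
        s i.castSucc ω < s (Fin.last n) ω).card} ≤
      ENNReal.ofReal (((n : ℝ) + 1 - k) / (n + 1)) := by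
  have hbound := hexch.measure_setOf_le_numLT_le hmeas k (Fin.last n)
  simp only [numLT_last] at hbound
  convert hbound using 1
  rw [ENNReal.ofReal_div_of_pos (by positivity), ENNReal.ofReal_sub _ k.cast_nonneg]
  norm_cast

theorem stmt12 {Ω : Type*} [MeasureSpace Ω] [IsProbabilityMeasure (ℙ : Measure Ω)]
    (n : ℕ) (s : Fin (n + 1) → Ω → ℝ) (hmeas : ∀ i, Measurable (s i))
    (hexch : Exchangeable s)
    (k : ℕ) (hk1 : 1 ≤ k) (hk2 : k ≤ n + 1) :
    ℙ {ω | k ≤ (Finset.univ.filter fun i : Fin n =>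
        s i.castSucc ω < s (Fin.last n) ω).card} ≤
      ENNReal.ofReal (((n : ℝ) + 1 - k) / (n + 1)) :=
  stmt12_general n s hmeas hexch k
end
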